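/- Let n ≥ 2 and let (C, C̄) be an equitable 2-partition of H(n,q) with quotient matrix S satisfying S₁₁ − S₂₁ = (q−1)n − 2q. For α ∈ 𝒜 let E_α denote the set of essential coordinates of (χ_C)_n^α. If there exist α, β ∈ 𝒜 with E_α ≠ E_β, then for every α ∈ 𝒜 the set E_α has exactly one element. -/

import Mathlib

/-!
Write `F_γ y = χ_C (y, γ)`. Equitability and the value of `S₁₁ - S₂₁` make every difference
`F_γ - F_δ` an eigenfunction of `H(n, q)` for the eigenvalue `(q - 1) n - q`, and for such an
eigenfunction the increment along a coordinate does not depend on the other coordinates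
(maximum principle). If `k` is essential for `F_α` but not for `F_β`, the increments of the
`{0,1}`-valued `F_α` along `k` are therefore constant, which forces `F_α` to depend on `x_k`
only. The same argument applied to `F_γ - F_α` shows that an `F_γ` with an essential coordinate
`j ≠ k` depends on `x_j` only. Finally `F_γ` cannot be constant: `F_α - F_γ` would then be a
sign-definite eigenfunction depending on `x_k` only, and such a function has mean zero along
`x_k`.
-/

/-- `(C, Cᶜ)` is an equitable 2-partition of the graph `G` (both cells nonempty) with
quotient matrix `S`: every vertex of `C` has exactly `S 0 0` neighbors in `C` and `S 0 1`
neighbors in `Cᶜ`, and every vertex of `Cᶜ` has exactly `S 1 0` neighbors in `C` and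
`S 1 1` neighbors in `Cᶜ`. -/
def IsEquitable2 {V : Type*} (G : SimpleGraph V) (C : Set V)
    (S : Matrix (Fin 2) (Fin 2) ℤ) : Prop :=
  C.Nonempty ∧ Cᶜ.Nonempty ∧
    (∀ x ∈ C, ((G.neighborSet x ∩ C).ncard : ℤ) = S 0 0 ∧
      ((G.neighborSet x ∩ Cᶜ).ncard : ℤ) = S 0 1) ∧
    (∀ x ∈ Cᶜ, ((G.neighborSet x ∩ C).ncard : ℤ) = S 1 0 ∧
      ((G.neighborSet x ∩ Cᶜ).ncard : ℤ) = S 1 1)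

/-- The Hamming graph `H(n,q)` on the vertex set `𝒜ⁿ` (where `|𝒜| = q`): two vertices are
adjacent iff they differ in exactly one coordinate. -/
def hammingGraph (n : ℕ) (𝒜 : Type*) [DecidableEq 𝒜] : SimpleGraph (Fin n → 𝒜) where
  Adj x y := hammingDist x y = 1
  symm := ⟨fun (x y : Fin n → 𝒜) h => by
    have h' : hammingDist x y = 1 := h
    show hammingDist y x = 1; rwa [hammingDist_comm]⟩
  loopless := ⟨fun (x : Fin n → 𝒜) h => by
    have h' : hammingDist x x = 1 := h
    simp [hammingDist_self] at h'⟩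

/-- A coordinate `i` is essential for `f` if there exist two inputs differing only in
coordinate `i` at which `f` takes different values. -/
def EssentialCoord {m : ℕ} {𝒜 : Type*} (f : (Fin m → 𝒜) → ℝ) (i : Fin m) : Prop :=
  ∃ x y : Fin m → 𝒜, (∀ j, j ≠ i → x j = y j) ∧ f x ≠ f y

open Function Finset

theorem Pi.induction_update {ι : Type*} [Fintype ι] [DecidableEq ι] {α : ι → Type*}
    {P : (∀ i, α i) → Prop} {x y : ∀ i, α i} (hx : P x)
    (step : ∀ z i, P z → P (update z i (y i))) : P y := by
  have key : ∀ t : Finset ι, P (t.piecewise y x) := by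
    intro t
    induction t using Finset.induction_on with
    | empty => simpa using hx
    | insert i t _ ih => rw [Finset.piecewise_insert]; exact step _ i ih
  simpa using key univ

section SumUpdate

variable {ι α : Type*} [Fintype ι] [DecidableEq ι] [Fintype α]

def sumUpdate (h : (ι → α) → ℝ) (y : ι → α) : ℝ :=
  ∑ j, ∑ a, h (update y j a)

lemma sumUpdate_sub (f g : (ι → α) → ℝ) (y : ι → α) :
    sumUpdate (f - g) y = sumUpdate f y - sumUpdate g y := by
  simp only [sumUpdate, Pi.sub_apply, Finset.sum_sub_distrib]

lemma sumUpdate_neg (h : (ι → α) → ℝ) (y : ι → α) : sumUpdate (-h) y = -sumUpdate h y := by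
  simp only [sumUpdate, Pi.neg_apply, Finset.sum_neg_distrib]

/-- Maximum principle: `u z` is the mean of `u` over the single-coordinate updates of `z`. -/
lemma apply_eq_apply_of_sumUpdate_eq {u : (ι → α) → ℝ}
    (hu : ∀ z, sumUpdate u z = Fintype.card ι * Fintype.card α * u z) (x y : ι → α) :
    u x = u y := by
  have : Nonempty (ι → α) := ⟨x⟩
  obtain ⟨z₀, hz₀⟩ := Finite.exists_max u
  suffices h : ∀ y, u y = u z₀ by rw [h x, h y]
  intro y
  refine Pi.induction_update (P := fun z => u z = u z₀) rfl fun z i hz => ?_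
  have hle : ∀ p ∈ (univ : Finset (ι × α)), u (update z p.1 p.2) ≤ u z₀ := fun p _ => hz₀ _
  have hsum : ∑ p : ι × α, u (update z p.1 p.2) = ∑ _p : ι × α, u z₀ := by
    rw [Fintype.sum_prod_type, ← sumUpdate, hu, hz,
      Finset.sum_const, Finset.card_univ, Fintype.card_prod, nsmul_eq_mul, Nat.cast_mul]
  exact (Finset.sum_eq_sum_iff_of_le hle).mp hsum (i, y i) (mem_univ _)

end SumUpdate

section FirstEigenfunction

variable {ι α : Type*} [Fintype ι] [DecidableEq ι] [Fintype α] {h : (ι → α) → ℝ}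

/-- Since `sumUpdate h = A h + |ι| h` for the adjacency operator `A` of the Hamming graph on
`ι → α`, this says that `h` is an eigenfunction of `A` for its second largest eigenvalue
`(|α| - 1) |ι| - |α|` (or zero). -/
def IsFirstEigenfunction (h : (ι → α) → ℝ) : Prop :=
  ∀ y, sumUpdate h y = Fintype.card α * (Fintype.card ι - 1) * h y

lemma IsFirstEigenfunction.neg (hh : IsFirstEigenfunction h) : IsFirstEigenfunction (-h) := by
  intro y
  rw [sumUpdate_neg, hh y, Pi.neg_apply, mul_neg]

/-- The increment along `k` satisfies the hypothesis of the maximum principle. -/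
lemma IsFirstEigenfunction.update_sub_update_eq (hh : IsFirstEigenfunction h) (k : ι) (b c : α)
    (x x' : ι → α) :
    h (update x k b) - h (update x k c) = h (update x' k b) - h (update x' k c) := by
  set u : (ι → α) → ℝ := fun z => h (update z k b) - h (update z k c)
  have hupd : ∀ z j a, u (update z j a) = h (update (update z k b) j a)
      - h (update (update z k c) j a) + if j = k then u z else 0 := by
    intro z j a
    rcases eq_or_ne j k with rfl | hjk
    · simp [u]
    · simp only [u, update_comm hjk, if_neg hjk, add_zero]
  refine apply_eq_apply_of_sumUpdate_eq (u := u) (fun z => ?_) x x'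
  simp only [sumUpdate, hupd, Finset.sum_add_distrib, Finset.sum_sub_distrib, Finset.sum_const,
    Finset.card_univ, nsmul_eq_mul]
  rw [← Finset.mul_sum, Finset.sum_ite_eq' univ k, if_pos (mem_univ k), ← sumUpdate, ← sumUpdate,
    hh, hh]
  ring

lemma IsFirstEigenfunction.sum_update_eq_zero (hh : IsFirstEigenfunction h) {k : ι}
    (hk : DependsOn h {k}) (x : ι → α) : ∑ a, h (update x k a) = 0 := by
  have hrow : ∀ j, ∑ a, h (update x j a)
      = (if j = k then ∑ a, h (update x k a) - Fintype.card α * h x else 0)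
        + Fintype.card α * h x := by
    intro j
    rcases eq_or_ne j k with rfl | hjk
    · simp
    · have hconst : ∀ a, h (update x j a) = h x := fun a =>
        hk fun i hi => by rw [Set.mem_singleton_iff.mp hi, update_of_ne hjk.symm]
      simp [hconst, hjk]
  have := hh x
  rw [sumUpdate, Finset.sum_congr rfl fun j _ => hrow j, Finset.sum_add_distrib,
    Finset.sum_ite_eq' univ k, if_pos (mem_univ k), Finset.sum_const, Finset.card_univ,
    nsmul_eq_mul] at this
  linarith

lemma IsFirstEigenfunction.eq_zero_of_nonneg (hh : IsFirstEigenfunction h) {k : ι}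
    (hk : DependsOn h {k}) (h0 : ∀ x, 0 ≤ h x) (x : ι → α) : h x = 0 := by
  have := (Finset.sum_eq_zero_iff_of_nonneg fun a _ => h0 _).mp (hh.sum_update_eq_zero hk x)
    (x k) (mem_univ _)
  rwa [update_eq_self] at this

end FirstEigenfunction

section EssentialCoord

variable {m : ℕ} {𝒜 : Type*} {f : (Fin m → 𝒜) → ℝ}

lemma essentialCoord_iff_exists_update {i : Fin m} :
    EssentialCoord f i ↔ ∃ x a, f (update x i a) ≠ f x := by
  constructor
  · rintro ⟨x, y, hxy, hne⟩
    refine ⟨y, x i, ?_⟩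
    convert hne using 2
    ext j
    rcases eq_or_ne j i with rfl | hj
    · simp
    · simp [update_of_ne hj, hxy j hj]
  · rintro ⟨x, a, hne⟩
    exact ⟨update x i a, x, fun j hj => update_of_ne hj _ _, hne⟩

lemma DependsOn.not_essentialCoord {s : Set (Fin m)} (hf : DependsOn f s) {i : Fin m}
    (hi : i ∉ s) : ¬EssentialCoord f i :=
  fun ⟨_, _, hxy, hne⟩ => hne (hf fun j hj => hxy j (ne_of_mem_of_not_mem hj hi))

lemma dependsOn_of_forall_not_essentialCoord {s : Set (Fin m)}
    (hs : ∀ i ∉ s, ¬EssentialCoord f i) : DependsOn f s := by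
  intro x y hxy
  suffices h : (∀ i ∈ s, y i = x i) ∧ f y = f x from h.2.symm
  refine Pi.induction_update (P := fun z => (∀ i ∈ s, z i = x i) ∧ f z = f x)
    ⟨fun _ _ => rfl, rfl⟩ fun z i ⟨hzs, hzf⟩ => ?_
  by_cases hi : i ∈ s
  · rwa [← hxy i hi, ← hzs i hi, update_eq_self]
  · refine ⟨fun j hj => ?_, ?_⟩
    · rw [update_of_ne (ne_of_mem_of_not_mem hj hi), hzs j hj]
    · rw [← hzf]
      by_contra hne
      exact hs i hi (essentialCoord_iff_exists_update.mpr ⟨z, y i, hne⟩)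

lemma setOf_essentialCoord_eq_singleton {k : Fin m} (hf : DependsOn f {k})
    (hk : EssentialCoord f k) : {i | EssentialCoord f i} = {k} := by
  ext i
  refine ⟨fun hi => ?_, fun hi => (Set.mem_singleton_iff.mp hi) ▸ hk⟩
  by_contra hik
  exact hf.not_essentialCoord hik hi

end EssentialCoord

section BooleanDifference

variable {n : ℕ} {𝒜 : Type*} [Fintype 𝒜] {F G : (Fin n → 𝒜) → ℝ}

/-- The increments of `F` along `k` are those of `F - G`, hence the same everywhere. As `F` is
`{0,1}`-valued and some increment from `c` to `b` is `1`, `F` vanishes wherever `x k = c`, and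
then `F x` is the increment from `c` to `x k`. -/
lemma dependsOn_singleton_of_isFirstEigenfunction_sub (hF : ∀ x, F x = 0 ∨ F x = 1)
    (hFG : IsFirstEigenfunction (F - G)) {k : Fin n} (hkF : EssentialCoord F k)
    (hkG : ¬EssentialCoord G k) : DependsOn F {k} := by
  have hG : ∀ x a, G (update x k a) = G x := by
    simpa [essentialCoord_iff_exists_update] using hkG
  have hincr : ∀ x x' b c,
      F (update x k b) - F (update x k c) = F (update x' k b) - F (update x' k c) := by
    intro x x' b c
    have := hFG.update_sub_update_eq k b c x x'
    simp only [Pi.sub_apply, hG] at this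
    linarith
  obtain ⟨x₁, a, hne⟩ := essentialCoord_iff_exists_update.mp hkF
  obtain ⟨b, c, hb, hc⟩ : ∃ b c, F (update x₁ k b) = 1 ∧ F (update x₁ k c) = 0 := by
    rcases hF x₁ with h₁ | h₁ <;> rcases hF (update x₁ k a) with h₂ | h₂
    · exact absurd (h₂.trans h₁.symm) hne
    · exact ⟨a, x₁ k, h₂, by rwa [update_eq_self]⟩
    · exact ⟨x₁ k, a, by rwa [update_eq_self], h₂⟩
    · exact absurd (h₂.trans h₁.symm) hne
  have hzero : ∀ x, F (update x k c) = 0 := fun x => by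
    have := hincr x x₁ b c
    rcases hF (update x k b) with h | h <;> rcases hF (update x k c) with h' | h' <;> linarith
  intro x y hxy
  have := hincr x y (x k) c
  rw [update_eq_self, hzero, hzero, hxy k rfl, update_eq_self] at this
  linarith

lemma eq_of_isFirstEigenfunction_sub (hF : ∀ x, F x = 0 ∨ F x = 1)
    (hG : ∀ x, G x = 0 ∨ G x = 1) (hFG : IsFirstEigenfunction (F - G)) {k : Fin n}
    (hFk : DependsOn F {k}) (hG₀ : DependsOn G ∅) : F = G := by
  funext x
  have hGx : ∀ y, G y = G x := fun y => hG₀.empty y x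
  -- according to the constant value of `G`, either `F - G` or `G - F` is nonnegative
  have hdep : DependsOn (F - G) {k} := fun y z hyz => by
    simp only [Pi.sub_apply, hFk hyz, hGx]
  rcases hG x with h₀ | h₁
  · have := hFG.eq_zero_of_nonneg hdep (fun y => by
      rcases hF y with h | h <;> simp [h, hGx y, h₀]) x
    simpa [sub_eq_zero] using this
  · have := hFG.neg.eq_zero_of_nonneg (k := k)
      (fun y z hyz => by simp only [Pi.neg_apply, hdep hyz])
      (fun y => by rcases hF y with h | h <;> simp [h, hGx y, h₁]) x
    simpa [sub_eq_zero, eq_comm] using this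

end BooleanDifference

section Hamming

variable {m : ℕ} {𝒜 : Type*} [DecidableEq 𝒜]

lemma hammingGraph_adj_iff {x y : Fin m → 𝒜} :
    (hammingGraph m 𝒜).Adj x y ↔ ∃ j a, a ≠ x j ∧ update x j a = y := by
  change hammingDist x y = 1 ↔ _
  rw [hammingDist, Finset.card_eq_one]
  constructor
  · rintro ⟨j, hj⟩
    have hdiff : ∀ i, x i ≠ y i ↔ i = j := fun i => by
      simpa using Finset.ext_iff.mp hj i
    refine ⟨j, y j, fun h => (hdiff j).mpr rfl h.symm, funext fun i => ?_⟩
    rcases eq_or_ne i j with rfl | hij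
    · simp
    · rw [update_of_ne hij]
      exact not_not.mp (mt (hdiff i).mp hij)
  · rintro ⟨j, a, ha, rfl⟩
    refine ⟨j, Finset.ext fun i => ?_⟩
    rcases eq_or_ne i j with rfl | hij
    · simp [Ne.symm ha]
    · simp [hij]

lemma sumUpdate_indicator [Fintype 𝒜] (C : Set (Fin m → 𝒜)) (x : Fin m → 𝒜) :
    sumUpdate (C.indicator fun _ => 1) x
      = ((hammingGraph m 𝒜).neighborSet x ∩ C).ncard + m * C.indicator (fun _ => 1) x := by
  classical
  set P := univ.sigma fun j => univ.erase (x j)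
  have hinj : Set.InjOn (fun p : (_ : Fin m) × 𝒜 => update x p.1 p.2) P := by
    rintro ⟨j, a⟩ hp ⟨j', a'⟩ _ heq
    have ha : a ≠ x j := by simpa [P] using hp
    obtain rfl : j = j' := by
      by_contra hne
      have := congrFun heq j
      simp only [update_self, update_of_ne hne] at this
      exact ha this
    simpa using congrFun heq j
  have hN : (hammingGraph m 𝒜).neighborSet x ∩ C
      = ↑((P.filter fun p => update x p.1 p.2 ∈ C).image fun p => update x p.1 p.2) := by
    ext y
    simp only [P, Set.mem_inter_iff, SimpleGraph.mem_neighborSet, hammingGraph_adj_iff,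
      Finset.coe_image, Finset.coe_filter, Set.mem_image, Set.mem_ofPred_eq, Finset.mem_sigma,
      Finset.mem_univ, Finset.mem_erase, true_and, and_true, Sigma.exists]
    constructor
    · rintro ⟨⟨j, a, ha, rfl⟩, hC⟩
      exact ⟨j, a, ⟨ha, hC⟩, rfl⟩
    · rintro ⟨j, a, ⟨ha, hC⟩, rfl⟩
      exact ⟨⟨j, a, ha, rfl⟩, hC⟩
  have hsum : sumUpdate (C.indicator fun _ => 1) x
      = ∑ p ∈ P, C.indicator (fun _ => 1) (update x p.1 p.2)
        + m * C.indicator (fun _ => 1) x := by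
    calc sumUpdate (C.indicator fun _ => 1) x
        = ∑ j, (∑ a ∈ univ.erase (x j), C.indicator (fun _ => 1) (update x j a)
            + C.indicator (fun _ => 1) x) := by
          refine Finset.sum_congr rfl fun j _ => ?_
          rw [← Finset.sum_erase_add _ _ (mem_univ (x j)), update_eq_self]
      _ = _ := by
          rw [Finset.sum_add_distrib, Finset.sum_sigma, Finset.sum_const, Finset.card_univ,
            Fintype.card_fin, nsmul_eq_mul]
  rw [hsum, hN, Set.ncard_coe_finset, Finset.card_image_of_injOn
    (hinj.mono (Finset.coe_subset.mpr (Finset.filter_subset _ _))), Finset.card_filter]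
  simp [Set.indicator_apply]

end Hamming

section Equitable

variable {𝒜 : Type*} [Fintype 𝒜]

lemma IsEquitable2.sumUpdate_indicator [DecidableEq 𝒜] {m : ℕ} {C : Set (Fin m → 𝒜)}
    {S : Matrix (Fin 2) (Fin 2) ℤ} (hS : IsEquitable2 (hammingGraph m 𝒜) C S) (x : Fin m → 𝒜) :
    sumUpdate (C.indicator fun _ => 1) x
      = S 1 0 + (S 0 0 - S 1 0 + m) * C.indicator (fun _ => 1) x := by
  obtain ⟨-, -, hin, hout⟩ := hS
  rw [_root_.sumUpdate_indicator]
  by_cases hx : x ∈ C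
  · have hcount : (((hammingGraph m 𝒜).neighborSet x ∩ C).ncard : ℝ) = S 0 0 := by
      exact_mod_cast (hin x hx).1
    rw [hcount, Set.indicator_of_mem hx]
    ring
  · have hcount : (((hammingGraph m 𝒜).neighborSet x ∩ C).ncard : ℝ) = S 1 0 := by
      exact_mod_cast (hout x hx).1
    rw [hcount, Set.indicator_of_notMem hx]
    ring

lemma sumUpdate_snoc {n : ℕ} (f : (Fin (n + 1) → 𝒜) → ℝ) (y : Fin n → 𝒜) (γ : 𝒜) :
    sumUpdate f (Fin.snoc y γ)
      = sumUpdate (fun y => f (Fin.snoc y γ)) y + ∑ δ, f (Fin.snoc y δ) := by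
  simp only [sumUpdate, Fin.sum_univ_castSucc, ← Fin.snoc_update, Fin.update_snoc_last]

/-- The restriction satisfies `sumUpdate f_γ = c + q (n - 1) f_γ - ∑ δ, f_δ`, and the last sum
cancels in the differences. -/
lemma isFirstEigenfunction_snoc_sub {n : ℕ} {f : (Fin (n + 1) → 𝒜) → ℝ} {c : ℝ}
    (hf : ∀ x, sumUpdate f x = c + Fintype.card 𝒜 * (n - 1) * f x) (γ δ : 𝒜) :
    IsFirstEigenfunction ((fun y => f (Fin.snoc y γ)) - fun y => f (Fin.snoc y δ)) := by
  intro y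
  have hγ := hf (Fin.snoc y γ)
  have hδ := hf (Fin.snoc y δ)
  rw [sumUpdate_snoc] at hγ hδ
  rw [sumUpdate_sub, Fintype.card_fin, Pi.sub_apply]
  linear_combination hγ - hδ

lemma IsEquitable2.isFirstEigenfunction_snoc_sub [DecidableEq 𝒜] {n : ℕ}
    {C : Set (Fin (n + 1) → 𝒜)} {S : Matrix (Fin 2) (Fin 2) ℤ}
    (hS : IsEquitable2 (hammingGraph (n + 1) 𝒜) C S)
    (heig : S 0 0 - S 1 0 = ((Fintype.card 𝒜 : ℤ) - 1) * (n + 1) - 2 * Fintype.card 𝒜)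
    (γ δ : 𝒜) :
    IsFirstEigenfunction ((fun y => C.indicator (fun _ => (1 : ℝ)) (Fin.snoc y γ))
      - fun y => C.indicator (fun _ => 1) (Fin.snoc y δ)) := by
  refine _root_.isFirstEigenfunction_snoc_sub (c := S 1 0) (fun x => ?_) γ δ
  have heig' : (S 0 0 : ℝ) - S 1 0 = (Fintype.card 𝒜 - 1) * (n + 1) - 2 * Fintype.card 𝒜 := by
    exact_mod_cast heig
  rw [hS.sumUpdate_indicator]
  push_cast
  linear_combination C.indicator (fun _ => (1 : ℝ)) x * heig'

end Equitable

/-- The ambient Hamming graph is `H(n + 1, q)`, and the restriction `(χ_C)_{n+1}^α` is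
`y ↦ χ_C (snoc y α)`. -/
theorem stmt16_general {𝒜 : Type*} [Fintype 𝒜] [DecidableEq 𝒜] (q n : ℕ)
    (hq : Fintype.card 𝒜 = q)
    (C : Set (Fin (n + 1) → 𝒜)) (S : Matrix (Fin 2) (Fin 2) ℤ)
    (hS : IsEquitable2 (hammingGraph (n + 1) 𝒜) C S)
    (heig : S 0 0 - S 1 0 = ((q : ℤ) - 1) * (n + 1) - 2 * q)
    (hdiff : ∃ α β : 𝒜,
      {i : Fin n | EssentialCoord
          (fun y : Fin n → 𝒜 => C.indicator (fun _ => (1 : ℝ)) (Fin.snoc y α)) i} ≠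
      {i : Fin n | EssentialCoord
          (fun y : Fin n → 𝒜 => C.indicator (fun _ => (1 : ℝ)) (Fin.snoc y β)) i}) :
    ∀ α : 𝒜,
      {i : Fin n | EssentialCoord
          (fun y : Fin n → 𝒜 => C.indicator (fun _ => (1 : ℝ)) (Fin.snoc y α)) i}.ncard
        = 1 := by
  set F : 𝒜 → (Fin n → 𝒜) → ℝ := fun γ y => C.indicator (fun _ => 1) (Fin.snoc y γ)
  have hF : ∀ γ y, F γ y = 0 ∨ F γ y = 1 := fun γ y => by
    by_cases h : Fin.snoc y γ ∈ C <;> simp [F, h]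
  have hEig : ∀ γ δ, IsFirstEigenfunction (F γ - F δ) :=
    hS.isFirstEigenfunction_snoc_sub (hq ▸ heig)
  obtain ⟨α, β, k, hkα, hkβ⟩ : ∃ α β k, EssentialCoord (F α) k ∧ ¬EssentialCoord (F β) k := by
    obtain ⟨α, β, hne⟩ := hdiff
    by_contra! h
    exact hne (Set.ext fun i => ⟨h α β i, h β α i⟩)
  have hα : DependsOn (F α) {k} :=
    dependsOn_singleton_of_isFirstEigenfunction_sub (hF α) (hEig α β) hkα hkβ
  intro γ
  obtain ⟨j, hj, hjγ⟩ : ∃ j, DependsOn (F γ) {j} ∧ EssentialCoord (F γ) j := by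
    by_cases hother : ∃ j ≠ k, EssentialCoord (F γ) j
    · obtain ⟨j, hjk, hj⟩ := hother
      exact ⟨j, dependsOn_singleton_of_isFirstEigenfunction_sub (hF γ) (hEig γ α) hj
        (hα.not_essentialCoord hjk), hj⟩
    · push Not at hother
      refine ⟨k, dependsOn_of_forall_not_essentialCoord hother, by_contra fun hkγ => ?_⟩
      have hconst : DependsOn (F γ) ∅ := dependsOn_of_forall_not_essentialCoord fun i _ => by
        rcases eq_or_ne i k with rfl | hik
        exacts [hkγ, hother i hik]
      have hαγ := eq_of_isFirstEigenfunction_sub (hF α) (hF γ) (hEig α γ) hα hconst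
      exact hconst.not_essentialCoord (Set.notMem_empty k) (hαγ ▸ hkα)
  rw [setOf_essentialCoord_eq_singleton hj hjγ, Set.ncard_singleton]

/-- here the ambient Hamming graph is `H(n+1, q)`, `n + 1 ≥ 2`, and the
restriction `(χ_C)_{n+1}^α` fixing the last coordinate to `α` is `y ↦ χ_C (snoc y α)`:
if the sets of essential coordinates `E_α` of the restrictions are not all equal, then
every `E_α` has exactly one element. -/
theorem stmt16 {𝒜 : Type*} [Fintype 𝒜] [DecidableEq 𝒜] (q n : ℕ)
    (hq : Fintype.card 𝒜 = q) (hq2 : 2 ≤ q) (hn : 1 ≤ n)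
    (C : Set (Fin (n + 1) → 𝒜)) (S : Matrix (Fin 2) (Fin 2) ℤ)
    (hS : IsEquitable2 (hammingGraph (n + 1) 𝒜) C S)
    (heig : S 0 0 - S 1 0 = ((q : ℤ) - 1) * (n + 1) - 2 * q)
    (hdiff : ∃ α β : 𝒜,
      {i : Fin n | EssentialCoord
          (fun y : Fin n → 𝒜 => C.indicator (fun _ => (1 : ℝ)) (Fin.snoc y α)) i} ≠
      {i : Fin n | EssentialCoord
          (fun y : Fin n → 𝒜 => C.indicator (fun _ => (1 : ℝ)) (Fin.snoc y β)) i}) :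
    ∀ α : 𝒜,
      {i : Fin n | EssentialCoord
          (fun y : Fin n → 𝒜 => C.indicator (fun _ => (1 : ℝ)) (Fin.snoc y α)) i}.ncard
        = 1 :=
  stmt16_general q n hq C S hS heig hdiff
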